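/- Let A ∈ ℝ^{n×m}, let v ∈ ℝⁿ be a unit vector, set x* = Aᵀ v / ‖Aᵀ v‖₂ (assuming Aᵀv ≠ 0), let 0 ≤ ω_d < 1/√m, and x^ω = S(x*, ω_d)/‖S(x*,ω_d)‖₂. Then ⟨Aᵀ v, x^ω⟩ ≥ (1 − ω_d√m + ω_d)·‖Aᵀ v‖₂. -/
import Mathlib


/-- Euclidean (ℓ2) norm of a finitely indexed real vector. -/
noncomputable def n2 {α : Type*} [Fintype α] (x : α → ℝ) : ℝ :=
  Real.sqrt (∑ i, x i ^ 2)

/-- ℓ1 norm of a finitely indexed real vector. -/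
noncomputable def n1 {α : Type*} [Fintype α] (x : α → ℝ) : ℝ :=
  ∑ i, |x i|

/-- Entrywise soft-thresholding operator `S(a, ω)ᵢ = sgn(aᵢ) · max(|aᵢ| − ω, 0)`. -/
noncomputable def st {α : Type*} [Fintype α] (a : α → ℝ) (ω : ℝ) : α → ℝ :=
  fun i => Real.sign (a i) * max (|a i| - ω) 0

lemma n2_nonneg {α : Type*} [Fintype α] (x : α → ℝ) : 0 ≤ n2 x :=
  Real.sqrt_nonneg _

lemma sq_n2 {α : Type*} [Fintype α] (x : α → ℝ) : n2 x ^ 2 = ∑ i, x i ^ 2 :=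
  Real.sq_sqrt (Finset.sum_nonneg fun i _ => sq_nonneg _)

lemma n2_eq_norm {α : Type*} [Fintype α] (x : α → ℝ) :
    n2 x = ‖(WithLp.equiv 2 (α → ℝ)).symm x‖ := by
  rw [EuclideanSpace.norm_eq]
  simp [n2, Real.norm_eq_abs, sq_abs]

lemma n2_triangle {α : Type*} [Fintype α] (x y : α → ℝ) :
    n2 x ≤ n2 (x - y) + n2 y := by
  rw [n2_eq_norm, n2_eq_norm, n2_eq_norm]
  have h : (WithLp.equiv 2 (α → ℝ)).symm (x - y)
      = (WithLp.equiv 2 (α → ℝ)).symm x - (WithLp.equiv 2 (α → ℝ)).symm y := rfl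
  rw [h]
  simpa using norm_add_le ((WithLp.equiv 2 (α → ℝ)).symm x - (WithLp.equiv 2 (α → ℝ)).symm y)
    ((WithLp.equiv 2 (α → ℝ)).symm y)

lemma n2_le_n1 {α : Type*} [Fintype α] (x : α → ℝ) : n2 x ≤ n1 x := by
  have h1 : ∑ i, x i ^ 2 ≤ (∑ i, |x i|) ^ 2 := by
    calc (∑ i, x i ^ 2) = ∑ i, |x i| ^ 2 := by simp [sq_abs]
      _ ≤ (∑ i, |x i|) ^ 2 :=
        Finset.sum_sq_le_sq_sum_of_nonneg (fun i _ => abs_nonneg _)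
  calc n2 x = Real.sqrt (∑ i, x i ^ 2) := rfl
    _ ≤ Real.sqrt ((∑ i, |x i|) ^ 2) := Real.sqrt_le_sqrt h1
    _ = abs (∑ i, |x i|) := Real.sqrt_sq_eq_abs _
    _ = n1 x := abs_of_nonneg (Finset.sum_nonneg fun i _ => abs_nonneg _)

lemma st_key (a ω : ℝ) (hω : 0 ≤ ω) :
    a * (Real.sign a * max (|a| - ω) 0)
      = (Real.sign a * max (|a| - ω) 0) ^ 2 + ω * |Real.sign a * max (|a| - ω) 0| := by
  rcases lt_trichotomy a 0 with h | h | h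
  · rw [Real.sign_of_neg h, abs_of_neg h]
    rcases max_cases (-a - ω) 0 with ⟨he, hc⟩ | ⟨he, hc⟩ <;> rw [he]
    · rw [abs_mul, abs_of_nonneg (by linarith : (0:ℝ) ≤ -a - ω)]
      simp only [abs_neg, abs_one]
      nlinarith
    · simp
  · simp [h, abs_of_nonneg hω]
  · rw [Real.sign_of_pos h, abs_of_pos h]
    rcases max_cases (a - ω) 0 with ⟨he, hc⟩ | ⟨he, hc⟩ <;> rw [he]
    · rw [abs_mul, abs_of_nonneg (by linarith : (0:ℝ) ≤ a - ω), abs_one]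
      nlinarith
    · simp

lemma st_diff_sq (a ω : ℝ) (hω : 0 ≤ ω) :
    (a - Real.sign a * max (|a| - ω) 0) ^ 2 ≤ ω ^ 2 := by
  rcases lt_trichotomy a 0 with h | h | h
  · rw [Real.sign_of_neg h, abs_of_neg h]
    rcases max_cases (-a - ω) 0 with ⟨he, hc⟩ | ⟨he, hc⟩ <;> rw [he] <;> nlinarith
  · simp [h]; nlinarith
  · rw [Real.sign_of_pos h, abs_of_pos h]
    rcases max_cases (a - ω) 0 with ⟨he, hc⟩ | ⟨he, hc⟩ <;> rw [he] <;> nlinarith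

theorem stmt15 {n m : ℕ} (A : Matrix (Fin n) (Fin m) ℝ) (v : Fin n → ℝ) (hv : n2 v = 1)
    (hAv : A.transpose.mulVec v ≠ 0) (ω : ℝ) (hω0 : 0 ≤ ω) (hω : ω < 1 / Real.sqrt m)
    (xs : Fin m → ℝ)
    (hxs : xs = fun j => A.transpose.mulVec v j / n2 (A.transpose.mulVec v))
    (xω : Fin m → ℝ) (hxω : xω = fun j => st xs ω j / n2 (st xs ω)) :
    (1 - ω * Real.sqrt m + ω) * n2 (A.transpose.mulVec v)
      ≤ ∑ j, A.transpose.mulVec v j * xω j := by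
  rcases Nat.eq_zero_or_pos m with hm | hm
  · subst hm
    exact absurd (funext fun j => j.elim0) hAv
  set u := A.transpose.mulVec v with hu
  have hsm : 0 < Real.sqrt m := Real.sqrt_pos.mpr (by exact_mod_cast hm)
  have hωm : ω * Real.sqrt m < 1 := by
    calc ω * Real.sqrt m < (1 / Real.sqrt m) * Real.sqrt m :=
          mul_lt_mul_of_pos_right hω hsm
      _ = 1 := by field_simp
  -- nu > 0
  have hnu : 0 < n2 u := by
    rcases lt_or_eq_of_le (n2_nonneg u) with h | h
    · exact h
    exfalso
    apply hAv
    funext j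
    have hs : ∑ i, u i ^ 2 = 0 := by
      have := sq_n2 u
      rw [← h] at this
      simpa using this.symm
    have := (Finset.sum_eq_zero_iff_of_nonneg (fun i _ => sq_nonneg (u i))).mp hs j
      (Finset.mem_univ j)
    have : u j = 0 := by nlinarith [this]
    simpa using this
  -- n2 xs = 1
  have hxs2 : ∑ j, xs j ^ 2 = 1 := by
    rw [hxs]
    simp only [div_pow]
    rw [← Finset.sum_div, ← sq_n2 u]
    field_simp
  have hnxs : n2 xs = 1 := by
    rw [n2, hxs2, Real.sqrt_one]
  set s : Fin m → ℝ := st xs ω with hs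
  -- diff bound
  have hdiff : n2 (xs - s) ≤ ω * Real.sqrt m := by
    have h1 : ∑ j, (xs j - s j) ^ 2 ≤ ∑ j : Fin m, ω ^ 2 :=
      Finset.sum_le_sum fun j _ => st_diff_sq (xs j) ω hω0
    have h2 : ∑ j : Fin m, ω ^ 2 = (m : ℝ) * ω ^ 2 := by simp [mul_comm]
    calc n2 (xs - s) = Real.sqrt (∑ j, (xs j - s j) ^ 2) := rfl
      _ ≤ Real.sqrt ((m : ℝ) * ω ^ 2) := Real.sqrt_le_sqrt (by rw [← h2]; exact h1)
      _ = Real.sqrt m * Real.sqrt (ω ^ 2) := Real.sqrt_mul (by positivity) _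
      _ = ω * Real.sqrt m := by rw [Real.sqrt_sq hω0, mul_comm]
  have htri : 1 - ω * Real.sqrt m ≤ n2 s := by
    have := n2_triangle xs s
    rw [hnxs] at this
    linarith
  have hns : 0 < n2 s := lt_of_lt_of_le (by linarith) htri
  -- key identity
  have hkey : ∑ j, xs j * s j = n2 s ^ 2 + ω * n1 s := by
    rw [sq_n2, n1, Finset.mul_sum, ← Finset.sum_add_distrib]
    exact Finset.sum_congr rfl fun j _ => st_key (xs j) ω hω0
  have hn1 : n2 s ≤ n1 s := n2_le_n1 s
  -- final computation
  have hus : ∀ j, u j = n2 u * xs j := by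
    intro j
    rw [hxs]
    field_simp
  have hsum : ∑ j, u j * xω j = n2 u * (n2 s ^ 2 + ω * n1 s) / n2 s := by
    rw [hxω]
    simp only
    calc (∑ j, u j * (s j / n2 s)) = (∑ j, u j * s j) / n2 s := by
          rw [Finset.sum_div]; exact Finset.sum_congr rfl fun j _ => by ring
      _ = (n2 u * ∑ j, xs j * s j) / n2 s := by
          rw [Finset.mul_sum]
          congr 1
          exact Finset.sum_congr rfl fun j _ => by rw [hus j]; ring
      _ = n2 u * (n2 s ^ 2 + ω * n1 s) / n2 s := by rw [hkey]
  rw [hsum]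
  have hfact : (1 - ω * Real.sqrt m + ω) * n2 s ≤ n2 s ^ 2 + ω * n1 s := by
    nlinarith
  calc (1 - ω * Real.sqrt m + ω) * n2 u
      = n2 u * (1 - ω * Real.sqrt m + ω) := by ring
    _ ≤ n2 u * ((n2 s ^ 2 + ω * n1 s) / n2 s) := by
        apply mul_le_mul_of_nonneg_left _ (le_of_lt hnu)
        rw [le_div_iff₀ hns]
        exact hfact
    _ = n2 u * (n2 s ^ 2 + ω * n1 s) / n2 s := by ring
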